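/- Let r₀, k, d₀, d₁, l be integers with d₁(kd₀) − l·r₀ = 1. Define the Mukai vector components of a map F on the abelian group ℤ³ (coordinates (rank, degree coefficient, length coefficient) with respect to the basis 1, c₁(L), ω, mapped to the basis 1, c₁(L̂), ω̂) by F(1) = (d₀²k, d₀l, l²r₀), F(c₁(L)) = (2d₀kr₀, 2d₀kd₁ − 1, 2d₀k²d₁² − 2d₁k), F(ω) = (r₀, d₁, d₁²k). Then F preserves the Mukai pairing ⟨(r,d,a),(r',d',a')⟩ = 2kr₀·dd' − ra' − r'a, i.e., F is an isometry of the Mukai lattice. -/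
import Mathlib

/-- The Mukai pairing on `ℤ³` for a surface with `(L²) = 2r₀k`:
`⟨(r,d,a),(r',d',a')⟩ = 2kr₀·dd' − ra' − r'a`. -/
def mukaiPair (r₀ k : ℤ) (v w : ℤ × ℤ × ℤ) : ℤ :=
  2 * k * r₀ * v.2.1 * w.2.1 - v.1 * w.2.2 - w.1 * v.2.2

/-- The cohomological Fourier–Mukai transform of Lemma 2.1, defined on the basis
`1 = (1,0,0)`, `c₁(L) = (0,1,0)`, `ω = (0,0,1)` and extended by linearity. -/
def FMtransform (r₀ k d₀ d₁ l : ℤ) (v : ℤ × ℤ × ℤ) : ℤ × ℤ × ℤ :=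
  (v.1 * (d₀ ^ 2 * k) + v.2.1 * (2 * d₀ * k * r₀) + v.2.2 * r₀,
   v.1 * (d₀ * l) + v.2.1 * (2 * d₀ * k * d₁ - 1) + v.2.2 * d₁,
   v.1 * (l ^ 2 * r₀) + v.2.1 * (2 * d₀ * k ^ 2 * d₁ ^ 2 - 2 * d₁ * k) + v.2.2 * (d₁ ^ 2 * k))

theorem fm_transform_isometry (r₀ k d₀ d₁ l : ℤ) (h : d₁ * (k * d₀) - l * r₀ = 1)
    (v w : ℤ × ℤ × ℤ) :
    mukaiPair r₀ k (FMtransform r₀ k d₀ d₁ l v) (FMtransform r₀ k d₀ d₁ l w) =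
      mukaiPair r₀ k v w := by
  simp only [mukaiPair, FMtransform]
  linear_combination
    (-(v.2.2 * w.1) - v.1 * w.2.2 - k * d₀ * d₁ * v.2.2 * w.1 - k * d₀ * d₁ * v.1 * w.2.2
      - 2 * k ^ 2 * d₀ ^ 2 * d₁ * v.2.1 * w.1 - 2 * k ^ 2 * d₀ ^ 2 * d₁ * v.1 * w.2.1
      + r₀ * l * v.2.2 * w.1 + r₀ * l * v.1 * w.2.2
      + 2 * r₀ * k * d₀ * l * v.2.1 * w.1 + 2 * r₀ * k * d₀ * l * v.1 * w.2.1) * h
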